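/- For every n ≥ 1, the subspace Ê_n is a deformation retract of Êmb(T_{Γ_n}): there are a retraction ρ : Êmb(T_{Γ_n}) → Ê_n and a homotopy H : Êmb(T_{Γ_n}) × [0,1] → Êmb(T_{Γ_n}) with H(−,1) = id and H(−,0) = ρ. In particular the completed configuration space Êmb(T_{Γ_n}) of n pairwise disjoint oriented lines in ℝ³ is homotopy equivalent to the completed space Ê_n of n oriented lines through the origin. -/

import Mathlib

open scoped RealInnerProductSpace ENNReal
open Set Filter

noncomputable section

abbrev Pt3 := EuclideanSpace ℝ (Fin 3)

/-- The space `ℒ` of oriented lines in `ℝ³`: pairs `(v, x)` with `v` a unit direction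
vector and `x` the point of the line nearest the origin (so `⟪v, x⟫ = 0`), with the metric
induced from `S² × ℝ³`. -/
abbrev OLine := {p : Pt3 × Pt3 // ‖p.1‖ = 1 ∧ ⟪p.1, p.2⟫ = 0}

/-- The underlying set of points of an oriented line. -/
def lineSet (ℓ : OLine) : Set Pt3 := {q | ∃ t : ℝ, q = ℓ.val.2 + t • ℓ.val.1}

/-- The `x`-axis in `ℝ³`. -/
def xAxis : Set Pt3 :=
  {q | ∃ t : ℝ, q = t • (WithLp.equiv 2 (Fin 3 → ℝ)).symm ![1, 0, 0]}

/-- The (infimal) Euclidean distance between two subsets of `ℝ³`. -/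
def setDist (A B : Set Pt3) : ℝ := sInf {r : ℝ | ∃ p ∈ A, ∃ q ∈ B, r = dist p q}

/-- The distance from an oriented line to the `x`-axis. -/
def axisDist (ℓ : OLine) : ℝ := setDist (lineSet ℓ) xAxis

/-- Oriented lines disjoint from the `x`-axis (the reduced configuration space `N^re(Γ₁)`). -/
def NdisjSet : Set OLine := {ℓ | lineSet ℓ ∩ xAxis = ∅}

def pathInf {X : Type*} [EMetricSpace X] (S : Set X) (x y : X) : ℝ≥0∞ :=
  ⨅ (γ : ℝ → X) (_ : ContinuousOn γ (Set.Icc 0 1)) (_ : γ 0 = x) (_ : γ 1 = y)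
    (_ : Set.MapsTo γ (Set.Icc 0 1) S), eVariationOn γ (Set.Icc 0 1)

def dpath {X : Type*} [EMetricSpace X] (S : Set X) (x y : X) : ℝ :=
  (min (pathInf S x y) 1).toReal

structure ModelsPathMetric {α : Type*} [EMetricSpace α] (S : Set α) (X : Type*)
    [MetricSpace X] (e : X → α) : Prop where
  bij : Set.BijOn e Set.univ S
  dist_eq : ∀ a b : X, dist a b = dpath S (e a) (e b)


/-- The space of `n`-tuples of pairwise disjoint oriented lines in `ℝ³`. -/
def LinesEmb (n : ℕ) : Set (Fin n → OLine) :=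
  {g | ∀ i j : Fin n, i ≠ j → lineSet (g i) ∩ lineSet (g j) = ∅}

/-! The homotheties `q ↦ t • q` of `ℝ³`, `t ∈ (0, 1]`, act on an oriented line `(v, x)` by
`x ↦ t • x` and keep disjoint lines disjoint. They are `1`-Lipschitz for the path metric, and for
a fixed configuration `g` the scalings from `t` to `s` trace a path of length at most
`|t - s| · ∑ ‖xᵢ‖`. So they extend to the completion, where `t ↦ σₜ z` is still Lipschitz and
hence extends continuously to `t = 0`. The resulting homotopy from `σ₀` to the identity is
stationary on configurations through the origin (where `∑ ‖xᵢ‖ = 0`), and `σ₀` lands there. -/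

open scoped Pointwise NNReal
open UniformSpace unitInterval

def scaleLine (t : ℝ) (ℓ : OLine) : OLine :=
  ⟨(ℓ.val.1, t • ℓ.val.2), ℓ.prop.1, by rw [inner_smul_right, ℓ.prop.2, mul_zero]⟩

def scaleLines {ι : Type*} (t : ℝ) (g : ι → OLine) : ι → OLine := fun i => scaleLine t (g i)

def totalOffset {ι : Type*} [Fintype ι] (g : ι → OLine) : ℝ := ∑ i, ‖(g i).val.2‖

section Scaling

variable {ι : Type*}

lemma lineSet_scaleLine {t : ℝ} (ht : t ≠ 0) (ℓ : OLine) :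
    lineSet (scaleLine t ℓ) = t • lineSet ℓ := by
  ext q
  simp only [lineSet, scaleLine, Set.mem_smul_set, Set.mem_ofPred_eq]
  constructor
  · rintro ⟨c, rfl⟩
    refine ⟨ℓ.val.2 + (c / t) • ℓ.val.1, ⟨c / t, rfl⟩, ?_⟩
    rw [smul_add, smul_smul, mul_div_cancel₀ c ht]
  · rintro ⟨_, ⟨c, rfl⟩, rfl⟩
    exact ⟨t * c, by rw [smul_add, smul_smul]⟩

lemma scaleLines_mem_linesEmb {n : ℕ} {t : ℝ} (ht : t ≠ 0) {g : Fin n → OLine}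
    (hg : g ∈ LinesEmb n) : scaleLines t g ∈ LinesEmb n := fun i j hij => by
  simp only [scaleLines, lineSet_scaleLine ht, ← Set.smul_set_inter₀ ht, hg i j hij,
    Set.smul_set_empty]

lemma scaleLines_one (g : ι → OLine) : scaleLines 1 g = g :=
  funext fun _ => Subtype.ext (Prod.ext rfl (one_smul ℝ _))

@[fun_prop]
lemma Continuous.scaleLines {Z : Type*} [TopologicalSpace Z] {f : Z → ℝ} {g : Z → ι → OLine}
    (hf : Continuous f) (hg : Continuous g) : Continuous fun z => scaleLines (f z) (g z) := by
  unfold _root_.scaleLines scaleLine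
  fun_prop

lemma dist_scaleLine_le {t : ℝ} (ht : |t| ≤ 1) (ℓ ℓ' : OLine) :
    dist (scaleLine t ℓ) (scaleLine t ℓ') ≤ dist ℓ ℓ' := by
  simp only [Subtype.dist_eq, Prod.dist_eq, scaleLine, dist_smul₀, Real.norm_eq_abs]
  gcongr
  exact mul_le_of_le_one_left dist_nonneg ht

variable [Fintype ι]

lemma lipschitzWith_scaleLines {t : ℝ} (ht : |t| ≤ 1) :
    LipschitzWith 1 (scaleLines (ι := ι) t) :=
  LipschitzWith.of_dist_le_mul fun g g' => by
    rw [NNReal.coe_one, one_mul]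
    exact (dist_pi_le_iff dist_nonneg).2 fun i =>
      (dist_scaleLine_le ht _ _).trans (dist_le_pi_dist g g' i)

lemma totalOffset_nonneg (g : ι → OLine) : 0 ≤ totalOffset g :=
  Finset.sum_nonneg fun _ _ => norm_nonneg _

lemma dist_scaleLines_le (t s : ℝ) (g : ι → OLine) :
    dist (scaleLines t g) (scaleLines s g) ≤ dist t s * totalOffset g := by
  refine (dist_pi_le_iff (mul_nonneg dist_nonneg (totalOffset_nonneg g))).2 fun i => ?_
  have hx : dist (t • (g i).val.2) (s • (g i).val.2) = dist t s * ‖(g i).val.2‖ := by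
    rw [dist_eq_norm, ← sub_smul, norm_smul, Real.dist_eq, Real.norm_eq_abs]
  simp only [scaleLines, scaleLine, Subtype.dist_eq, Prod.dist_eq, dist_self, hx]
  refine max_le (mul_nonneg dist_nonneg (totalOffset_nonneg g))
    (mul_le_mul_of_nonneg_left ?_ dist_nonneg)
  exact Finset.single_le_sum (f := fun i => ‖(g i).val.2‖) (fun _ _ => norm_nonneg _)
    (Finset.mem_univ i)

@[fun_prop]
lemma continuous_totalOffset : Continuous (totalOffset (ι := ι)) := by
  unfold totalOffset
  fun_prop

end Scaling

section PathMetric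

variable {α β : Type*} [EMetricSpace α] [EMetricSpace β] {S : Set α} {T : Set β}

lemma pathInf_le_eVariationOn {γ : ℝ → α} (hc : ContinuousOn γ (Icc 0 1))
    (hS : MapsTo γ (Icc 0 1) S) : pathInf S (γ 0) (γ 1) ≤ eVariationOn γ (Icc 0 1) :=
  iInf_le_of_le γ <| iInf_le_of_le hc <| iInf_le_of_le rfl <| iInf_le_of_le rfl <| iInf_le _ hS

lemma dpath_le_dpath_of_pathInf_le {x y : α} {x' y' : β} (h : pathInf T x' y' ≤ pathInf S x y) :
    dpath T x' y' ≤ dpath S x y :=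
  ENNReal.toReal_mono ((min_le_right _ _).trans_lt ENNReal.one_lt_top).ne (min_le_min h le_rfl)

lemma dpath_le_of_lipschitzOnWith {γ : ℝ → α} {K : ℝ≥0} (hγ : LipschitzOnWith K γ (Icc 0 1))
    (hS : MapsTo γ (Icc 0 1) S) : dpath S (γ 0) (γ 1) ≤ K := by
  have hvar : pathInf S (γ 0) (γ 1) ≤ K :=
    calc pathInf S (γ 0) (γ 1) ≤ eVariationOn (γ ∘ id) (Icc 0 1) :=
          pathInf_le_eVariationOn hγ.continuousOn hS
      _ ≤ K * eVariationOn id (Icc (0 : ℝ) 1) := hγ.comp_eVariationOn_le (mapsTo_id _)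
      _ = K := by simp
  exact ENNReal.toReal_mono ENNReal.coe_ne_top ((min_le_left _ _).trans hvar)

lemma dpath_map_le {f : α → β} (hf : LipschitzWith 1 f) (hfS : MapsTo f S T) (x y : α) :
    dpath T (f x) (f y) ≤ dpath S x y := by
  refine dpath_le_dpath_of_pathInf_le <| le_iInf fun γ => le_iInf fun hc => le_iInf fun h0 =>
    le_iInf fun h1 => le_iInf fun hγS => ?_
  subst h0 h1
  calc pathInf T (f (γ 0)) (f (γ 1)) ≤ eVariationOn (f ∘ γ) (Icc 0 1) :=
        pathInf_le_eVariationOn (hf.continuous.comp_continuousOn hc) (hfS.comp hγS)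
    _ ≤ 1 * eVariationOn γ (Icc 0 1) :=
        (hf.lipschitzOnWith (s := univ)).comp_eVariationOn_le (mapsTo_univ _ _)
    _ = eVariationOn γ (Icc 0 1) := one_mul _

lemma ModelsPathMetric.exists_lipschitzWith_lift {X : Type*} [MetricSpace X] {e : X → α}
    (hm : ModelsPathMetric S X e) {f : α → α} (hf : LipschitzWith 1 f) (hfS : MapsTo f S S) :
    ∃ g : X → X, LipschitzWith 1 g ∧ ∀ a, e (g a) = f (e a) := by
  have hlift : ∀ a, ∃ b, e b = f (e a) := fun a => by
    obtain ⟨b, -, hb⟩ := hm.bij.surjOn (hfS (hm.bij.mapsTo (mem_univ a)))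
    exact ⟨b, hb⟩
  choose g hg using hlift
  refine ⟨g, LipschitzWith.of_dist_le_mul fun a b => ?_, hg⟩
  rw [NNReal.coe_one, one_mul, hm.dist_eq, hm.dist_eq, hg, hg]
  exact dpath_map_le hf hfS _ _

end PathMetric

lemma dpath_scaleLines_le {n : ℕ} {g : Fin n → OLine} (hg : g ∈ LinesEmb n) {t s : ℝ}
    (ht : 0 < t) (hs : 0 < s) :
    dpath (LinesEmb n) (scaleLines t g) (scaleLines s g) ≤ dist t s * totalOffset g := by
  set γ : ℝ → Fin n → OLine := fun r => scaleLines (AffineMap.lineMap t s r) g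
  have hγ : LipschitzWith (dist t s * totalOffset g).toNNReal γ :=
    LipschitzWith.of_dist_le' fun r r' =>
      calc dist (γ r) (γ r') ≤ dist (AffineMap.lineMap t s r) (AffineMap.lineMap t s r')
              * totalOffset g := dist_scaleLines_le _ _ _
        _ = dist t s * totalOffset g * dist r r' := by rw [dist_lineMap_lineMap]; ring
  have hS : MapsTo γ (Icc 0 1) (LinesEmb n) := fun r hr =>
    scaleLines_mem_linesEmb ((convex_Ioi 0).lineMap_mem ht hs hr).ne' hg
  simpa [γ, Real.coe_toNNReal _ (mul_nonneg dist_nonneg (totalOffset_nonneg g))] using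
    dpath_le_of_lipschitzOnWith hγ.lipschitzOnWith hS

lemma denseRange_inclusion_Ioc_unitInterval :
    DenseRange (inclusion (Ioc_subset_Icc_self : Ioc (0 : ℝ) 1 ⊆ I)) :=
  (denseRange_inclusion_iff _).2 (closure_Ioc zero_ne_one).ge

theorem exists_continuousMap_unitInterval_extend {Y : Type*} [MetricSpace Y] [CompleteSpace Y]
    (S : Ioc (0 : ℝ) 1 → Y → Y) (M : Y → ℝ) (hS : ∀ t, LipschitzWith 1 (S t))
    (hSM : ∀ t s z, dist (S t z) (S s z) ≤ dist t s * M z) :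
    ∃ H : C(I × Y, Y), (∀ t z, H (inclusion Ioc_subset_Icc_self t, z) = S t z) ∧
      ∀ t s z, dist (H (t, z)) (H (s, z)) ≤ dist t s * M z := by
  set ι : Ioc (0 : ℝ) 1 → I := inclusion Ioc_subset_Icc_self
  have hι : IsUniformInducing ι := (isUniformEmbedding_set_inclusion _).isUniformInducing
  have hιd : DenseRange ι := denseRange_inclusion_Ioc_unitInterval
  have huc : ∀ z, UniformContinuous fun t => S t z := fun z =>
    (LipschitzWith.of_dist_le' fun t s => (hSM t s z).trans_eq (mul_comm _ _)).uniformContinuous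
  set F : I → Y → Y := fun t z => (hι.isDenseInducing hιd).extend (fun s => S s z) t
  have hιdist : ∀ t s, dist (ι t) (ι s) = dist t s := fun _ _ => rfl
  have hFS : ∀ t z, F (ι t) z = S t z := fun t z => uniformly_extend_of_ind hι hιd (huc z) t
  have hFc : ∀ z, Continuous fun t => F t z := fun z =>
    (uniformContinuous_uniformly_extend hι hιd (huc z)).continuous
  have hFM : ∀ t s z, dist (F t z) (F s z) ≤ dist t s * M z := fun t s z =>
    hιd.induction_on₂ (p := fun t s => dist (F t z) (F s z) ≤ dist t s * M z)
      (isClosed_le (by fun_prop) (by fun_prop))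
      (fun t s => by simpa [hFS, hιdist] using hSM t s z) t s
  have hFL : ∀ t, LipschitzWith 1 (F t) := fun t => LipschitzWith.of_dist_le_mul fun z w =>
    hιd.induction_on (p := fun t => dist (F t z) (F t w) ≤ (1 : ℝ≥0) * dist z w) t
      (isClosed_le (by fun_prop) continuous_const)
      (fun t => by simpa [hFS] using (hS t).dist_le_mul z w)
  exact ⟨⟨fun p => F p.1 p.2, continuous_prod_of_continuous_lipschitzWith' _ 1 hFL hFc⟩, hFS, hFM⟩

theorem ModelsPathMetric.exists_scaling_completion {n : ℕ} {X : Type*} [MetricSpace X]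
    {e : X → Fin n → OLine} (hm : ModelsPathMetric (LinesEmb n) X e)
    (πh : Completion X → Fin n → OLine) (hπc : Continuous πh) (hπe : ∀ x : X, πh x = e x) :
    ∃ S : Ioc (0 : ℝ) 1 → Completion X → Completion X, (∀ t, LipschitzWith 1 (S t)) ∧
      (∀ t s z, dist (S t z) (S s z) ≤ dist t s * totalOffset (πh z)) ∧
      (∀ t z, πh (S t z) = scaleLines t (πh z)) ∧ S ⟨1, right_mem_Ioc.2 one_pos⟩ = id := by
  have hmem : ∀ a, e a ∈ LinesEmb n := fun a => hm.bij.mapsTo (mem_univ a)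
  have hlift : ∀ t : Ioc (0 : ℝ) 1, ∃ g : X → X, LipschitzWith 1 g ∧
      ∀ a, e (g a) = scaleLines t (e a) := fun t =>
    hm.exists_lipschitzWith_lift
      (lipschitzWith_scaleLines (abs_le.2 ⟨by linarith [t.2.1], t.2.2⟩))
      fun _ hg => scaleLines_mem_linesEmb t.2.1.ne' hg
  choose g hgL hge using hlift
  have hgM : ∀ t s a, dist (g t a) (g s a) ≤ dist t s * totalOffset (e a) := fun t s a => by
    rw [hm.dist_eq, hge, hge]
    exact dpath_scaleLines_le (hmem a) t.2.1 s.2.1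
  have hg1 : g ⟨1, right_mem_Ioc.2 one_pos⟩ = id := funext fun a =>
    hm.bij.injOn (mem_univ _) (mem_univ _) (by rw [hge, scaleLines_one, id])
  have hmap : ∀ t (a : X), Completion.map (g t) a = g t a := fun t =>
    Completion.map_coe (hgL t).uniformContinuous
  refine ⟨fun t => Completion.map (g t), fun t => (hgL t).completion_map, ?_, ?_, ?_⟩
  · intro t s z
    induction z using Completion.induction_on with
    | hp => exact isClosed_le (by fun_prop) (by fun_prop)
    | ih a =>
      dsimp only
      rw [hmap, hmap, Completion.dist_eq, hπe]
      exact hgM t s a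
  · intro t z
    induction z using Completion.induction_on with
    | hp => exact isClosed_eq (by fun_prop) (by fun_prop)
    | ih a => dsimp only; rw [hmap, hπe, hπe, hge]
  · simp only [hg1, Completion.map_id]

theorem nonempty_homotopyEquiv_of_deformationRetract {Y : Type*} [TopologicalSpace Y]
    {E : Set Y} (H : C(I × Y, Y)) (h1 : ∀ z, H (1, z) = z) (h0 : ∀ z, H (0, z) ∈ E)
    (hE : ∀ z ∈ E, H (0, z) = z) : Nonempty (ContinuousMap.HomotopyEquiv Y E) := by
  let ρ : C(Y, E) := ⟨fun z => ⟨H (0, z), h0 z⟩, by fun_prop⟩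
  refine ⟨⟨ρ, ⟨Subtype.val, continuous_subtype_val⟩, ⟨⟨H, fun _ => rfl, h1⟩⟩, ?_⟩⟩
  convert ContinuousMap.Homotopic.refl _
  ext y
  exact (hE y y.2).symm

theorem stmt15_general (n : ℕ)
    (X : Type) [MetricSpace X] (e : X → (Fin n → OLine))
    (hm : ModelsPathMetric (LinesEmb n) X e)
    (πh : UniformSpace.Completion X → (Fin n → OLine))
    (hπc : Continuous πh) (hπe : ∀ x : X, πh x = e x) :
    ∃ ρ : UniformSpace.Completion X → UniformSpace.Completion X,
      Continuous ρ ∧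
      Set.range ρ ⊆ {z | ∀ i : Fin n, (πh z i).val.2 = 0} ∧
      (∀ z ∈ {z : UniformSpace.Completion X | ∀ i : Fin n, (πh z i).val.2 = 0}, ρ z = z) ∧
      (∃ H : C(↥unitInterval × UniformSpace.Completion X, UniformSpace.Completion X),
        (∀ z : UniformSpace.Completion X, H (1, z) = z) ∧
        (∀ z : UniformSpace.Completion X, H (0, z) = ρ z)) ∧
      Nonempty (ContinuousMap.HomotopyEquiv (UniformSpace.Completion X)
        {z : UniformSpace.Completion X | ∀ i : Fin n, (πh z i).val.2 = 0}) := by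
  obtain ⟨S, hSL, hSM, hπS, hS1⟩ := hm.exists_scaling_completion πh hπc hπe
  obtain ⟨H, hHS, hHM⟩ := exists_continuousMap_unitInterval_extend S _ hSL hSM
  have hH1 : ∀ z, H (1, z) = z := fun z => (hHS _ z).trans (congrFun hS1 z)
  have hH0 : ∀ z, ∀ i, (πh (H (0, z)) i).val.2 = 0 := fun z i => by
    have hπH : πh (H (0, z)) = scaleLines 0 (πh z) :=
      denseRange_inclusion_Ioc_unitInterval.induction_on
        (p := fun t : I => πh (H (t, z)) = scaleLines t (πh z)) 0
        (isClosed_eq (by fun_prop) (by fun_prop))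
        fun t => by rw [hHS, hπS]
    rw [hπH]
    exact zero_smul ℝ _
  have hHE : ∀ z, (∀ i, (πh z i).val.2 = 0) → H (0, z) = z := fun z hz => by
    have hM : totalOffset (πh z) = 0 := Finset.sum_eq_zero fun i _ => by rw [hz i, norm_zero]
    simpa [hM, hH1] using hHM 0 1 z
  exact ⟨fun z => H (0, z), by fun_prop, range_subset_iff.2 hH0, hHE, ⟨H, hH1, fun _ => rfl⟩,
    nonempty_homotopyEquiv_of_deformationRetract H hH1 hH0 hHE⟩

/-- the subspace `Ê_n ⊆ Êmb(T_{Γ_n})` of virtual configurations of `n`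
oriented lines all passing through the origin is a deformation retract of the completed
space `Êmb(T_{Γ_n})`; in particular the two spaces are homotopy equivalent.  Here `X` is an
abstract metric space identified via `e` with `(Emb(T_{Γ_n}), d_path)`, and `πh` is the
continuous extension to the completion of the (uniformly continuous) inclusion into `ℒⁿ`. -/
theorem stmt15 (n : ℕ) (hn : 1 ≤ n)
    (X : Type) [MetricSpace X] (e : X → (Fin n → OLine))
    (hm : ModelsPathMetric (LinesEmb n) X e)
    (πh : UniformSpace.Completion X → (Fin n → OLine))
    (hπc : Continuous πh) (hπe : ∀ x : X, πh x = e x) :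
    ∃ ρ : UniformSpace.Completion X → UniformSpace.Completion X,
      Continuous ρ ∧
      Set.range ρ ⊆ {z | ∀ i : Fin n, (πh z i).val.2 = 0} ∧
      (∀ z ∈ {z : UniformSpace.Completion X | ∀ i : Fin n, (πh z i).val.2 = 0}, ρ z = z) ∧
      (∃ H : C(↥unitInterval × UniformSpace.Completion X, UniformSpace.Completion X),
        (∀ z : UniformSpace.Completion X, H (1, z) = z) ∧
        (∀ z : UniformSpace.Completion X, H (0, z) = ρ z)) ∧
      Nonempty (ContinuousMap.HomotopyEquiv (UniformSpace.Completion X)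
        {z : UniformSpace.Completion X | ∀ i : Fin n, (πh z i).val.2 = 0}) :=
  stmt15_general n X e hm πh hπc hπe
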